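/- For every θ ∈ (0, π/2], ∫_0^θ 2·sin θ/(sin²θ + sin²x) dx = (2/√(1+sin²θ))·(π/2 − arctan(√(1−sin²θ)/√(1+sin²θ))). Equivalently, writing τ = sin θ and ζ₀(τ) = (2/√(1+τ²))·(π/2 − arctan(√(1−τ²)/√(1+τ²))), the integral equals ζ₀(sin θ). -/

import Mathlib

open Real Set

/-- The function `ζ₀(τ)` of the paper: the spherical length of the circular arc
from 1 to 0 making angle `arcsin τ` with `[0,1]` at `0`. -/
noncomputable def zeta0 (τ : ℝ) : ℝ :=
  2 / Real.sqrt (1 + τ^2) *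
    (π/2 - Real.arctan (Real.sqrt (1 - τ^2) / Real.sqrt (1 + τ^2)))

/-!
Put `s = sin θ`, `w = √(1 + s²)` and `γ(t) = w sin t + i s cos t`. Then `arg ∘ γ` has
derivative `-w s / |γ(t)|²` and `|γ(t)|² = s² + sin² t`, so the integral equals
`(2 / w) (arg γ(0) - arg γ(θ))`. As `γ(0) = i s` and `γ(θ) = s (w + i cos θ)`, this is
`(2 / w) (π / 2 - arctan (cos θ / w))`. Unlike `(2 / w) arctan (w tan t / s)`, the antiderivative
given by the substitution `u = tan t`, `arg ∘ γ` is smooth up to `t = π / 2`: `γ` stays in the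
closed first quadrant minus `0`.
-/

theorem HasDerivAt.arg_real {γ : ℝ → ℂ} {γ' : ℂ} {x : ℝ} (hγ : HasDerivAt γ γ' x)
    (hx : γ x ∈ Complex.slitPlane) :
    HasDerivAt (fun t => Complex.arg (γ t)) (γ' / γ x).im x := by
  simpa [Function.comp_def, Complex.log_im] using
    Complex.imCLM.hasFDerivAt.comp_hasDerivAt x (hγ.clog_real hx)

namespace Complex

theorem arg_eq_arctan_of_re_pos {z : ℂ} (hz : 0 < z.re) : arg z = Real.arctan (z.im / z.re) := by
  have hbound := abs_lt.1 (abs_arg_lt_pi_div_two_iff.2 (Or.inl hz))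
  rw [← tan_arg, Real.arctan_tan hbound.1 hbound.2]

noncomputable def ellipse (a b t : ℝ) : ℂ := ↑(a * Real.sin t) + ↑(b * Real.cos t) * I

@[simp]
theorem ellipse_re (a b t : ℝ) : (ellipse a b t).re = a * Real.sin t := by
  simp only [ellipse, add_re, mul_re, ofReal_re, ofReal_im, I_re, I_im]
  ring

@[simp]
theorem ellipse_im (a b t : ℝ) : (ellipse a b t).im = b * Real.cos t := by
  simp only [ellipse, add_im, mul_im, ofReal_re, ofReal_im, I_re, I_im]
  ring

theorem ellipse_zero (a b : ℝ) : ellipse a b 0 = b * I := by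
  simp [ellipse]

theorem ellipse_mem_slitPlane {a b t : ℝ} (ha : 0 < a) (hb : b ≠ 0) (ht : 0 ≤ Real.sin t) :
    ellipse a b t ∈ slitPlane := by
  rcases ht.lt_or_eq with hsin | hsin
  · exact Or.inl (by simpa using mul_pos ha hsin)
  · have hcos : Real.cos t ≠ 0 := by
      intro hcos
      simpa [← hsin, hcos] using Real.sin_sq_add_cos_sq t
    exact Or.inr (by simpa using mul_ne_zero hb hcos)

theorem hasDerivAt_arg_ellipse {a b t : ℝ} (ht : ellipse a b t ∈ slitPlane) :
    HasDerivAt (fun t => arg (ellipse a b t))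
      (-(a * b) / (a ^ 2 * Real.sin t ^ 2 + b ^ 2 * Real.cos t ^ 2)) t := by
  have hγ : HasDerivAt (ellipse a b) (↑(a * Real.cos t) + ↑(b * -Real.sin t) * I) t :=
    (((Real.hasDerivAt_sin t).const_mul a).ofReal_comp).add
      ((((Real.hasDerivAt_cos t).const_mul b).ofReal_comp).mul_const I)
  have hnormSq : normSq (ellipse a b t) = a ^ 2 * Real.sin t ^ 2 + b ^ 2 * Real.cos t ^ 2 := by
    rw [normSq_apply, ellipse_re, ellipse_im]
    ring
  refine (hγ.arg_real ht).congr_deriv ?_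
  rw [div_im, hnormSq, ellipse_re, ellipse_im, ← sub_div]
  simp only [add_re, add_im, mul_re, mul_im, ofReal_re, ofReal_im, I_re, I_im]
  congr 1
  linear_combination (-(a * b)) * Real.sin_sq_add_cos_sq t

theorem hasDerivAt_arg_ellipse_of_sq_eq {a b t : ℝ} (ha : 0 < a) (hb : b ≠ 0)
    (hab : a ^ 2 = 1 + b ^ 2) (ht : 0 ≤ Real.sin t) :
    HasDerivAt (fun t => arg (ellipse a b t)) (-(a * b) / (b ^ 2 + Real.sin t ^ 2)) t := by
  have hnormSq : a ^ 2 * Real.sin t ^ 2 + b ^ 2 * Real.cos t ^ 2 = b ^ 2 + Real.sin t ^ 2 := by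
    linear_combination Real.sin t ^ 2 * hab + b ^ 2 * Real.sin_sq_add_cos_sq t
  simpa only [hnormSq] using hasDerivAt_arg_ellipse (ellipse_mem_slitPlane ha hb ht)

end Complex

theorem arc_length_integral (θ : ℝ) (hθ : θ ∈ Set.Ioc (0:ℝ) (π/2)) :
    (∫ x in (0:ℝ)..θ, 2 * Real.sin θ / (Real.sin θ^2 + Real.sin x^2))
      = zeta0 (Real.sin θ) := by
  obtain ⟨hθ0, hθ2⟩ := hθ
  set s := Real.sin θ
  set w := √(1 + s ^ 2)
  have hs : 0 < s := sin_pos_of_pos_of_lt_pi hθ0 (by linarith [pi_pos])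
  have hw : 0 < w := by positivity
  have hw2 : w ^ 2 = 1 + s ^ 2 := sq_sqrt (by positivity)
  have hderiv : ∀ x ∈ uIcc 0 θ,
      HasDerivAt (fun t => -(2 / w) * Complex.arg (Complex.ellipse w s t))
        (2 * s / (s ^ 2 + Real.sin x ^ 2)) x := by
    intro x hx
    rw [uIcc_of_le hθ0.le] at hx
    have hsin : 0 ≤ Real.sin x :=
      sin_nonneg_of_nonneg_of_le_pi hx.1 (by linarith [hx.2, pi_pos])
    refine ((Complex.hasDerivAt_arg_ellipse_of_sq_eq hw hs.ne' hw2 hsin).const_mul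
      (-(2 / w))).congr_deriv ?_
    field_simp
  have hint :
      IntervalIntegrable (fun x => 2 * s / (s ^ 2 + Real.sin x ^ 2)) MeasureTheory.volume 0 θ :=
    (continuous_const.div (by fun_prop) fun x => by positivity).intervalIntegrable _ _
  have harg0 : Complex.arg (Complex.ellipse w s 0) = π / 2 := by
    rw [Complex.ellipse_zero, Complex.arg_real_mul _ hs, Complex.arg_I]
  have hargθ : Complex.arg (Complex.ellipse w s θ) = Real.arctan (√(1 - s ^ 2) / w) := by
    rw [Complex.arg_eq_arctan_of_re_pos (by simpa using mul_pos hw hs), Complex.ellipse_re,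
      Complex.ellipse_im, ← cos_eq_sqrt_one_sub_sin_sq (by linarith [pi_pos]) hθ2, mul_comm w]
    exact congrArg _ (mul_div_mul_left _ _ hs.ne')
  rw [intervalIntegral.integral_eq_sub_of_hasDerivAt hderiv hint, harg0, hargθ, zeta0]
  ring
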